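/- Let A ∈ ℝ^{m×n}, let p ∈ ℝ^m be a nonzero vector, let q ∈ ℝ^n, and let β ∈ [0,1]. Define q⁺ = β q + (1−β) (Aᵀ p)/‖p‖². Then ‖A − p (q⁺)ᵀ‖_F ≤ ‖A − p qᵀ‖_F. (This is the odd-iteration case of Proposition 1: the alternating update of the right factor does not increase the rank-one factorization error.) -/

import Mathlib

open Matrix Finset

/-- Frobenius norm of a real matrix: square root of the sum of squares of all entries. -/
noncomputable def frobNorm {m n : ℕ} (A : Matrix (Fin m) (Fin n) ℝ) : ℝ :=
  Real.sqrt (∑ i, ∑ j, (A i j) ^ 2)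

/-- Squared Euclidean 2-norm of a vector: `sqNorm v = ‖v‖²`. -/
def sqNorm {k : ℕ} (v : Fin k → ℝ) : ℝ := ∑ i, (v i) ^ 2

/-!
Column by column, the error `‖a - x p‖²` of approximating a column `a` of `A` by a multiple of `p`
is the quadratic `‖a - s p‖² + ‖p‖² (x - s)²` in `x`, minimised at the least-squares coefficient
`s = ⟨a, p⟩ / ‖p‖²`. The update moves each coefficient `x = q j` to `β x + (1 - β) s`, which
shrinks its distance to `s` by the factor `β ∈ [0, 1]`.
-/

lemma frobNorm_sub_vecMulVec {m n : ℕ} (A : Matrix (Fin m) (Fin n) ℝ) (p : Fin m → ℝ)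
    (v : Fin n → ℝ) :
    frobNorm (A - vecMulVec p v) = √(∑ j, ∑ i, (A i j - p i * v j) ^ 2) := by
  rw [frobNorm, Finset.sum_comm]
  simp only [Matrix.sub_apply, vecMulVec_apply]

lemma sqNorm_eq_dotProduct {k : ℕ} (v : Fin k → ℝ) : sqNorm v = v ⬝ᵥ v := by
  simp only [sqNorm, dotProduct, sq]

lemma sum_sq_sub_mul_eq {m : ℕ} (a p : Fin m → ℝ) (x : ℝ) :
    ∑ i, (a i - p i * x) ^ 2 = ∑ i, a i ^ 2 - 2 * x * (a ⬝ᵥ p) + x ^ 2 * sqNorm p := by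
  simp only [sqNorm, dotProduct, mul_sum, ← sum_sub_distrib, ← sum_add_distrib]
  exact sum_congr rfl fun i _ => by ring

-- Also true for `p = 0`, where the coefficient is `0⁻¹ * 0 = 0`.
lemma sqNorm_mul_leastSquaresCoeff {m : ℕ} (a p : Fin m → ℝ) :
    sqNorm p * ((sqNorm p)⁻¹ * (a ⬝ᵥ p)) = a ⬝ᵥ p := by
  by_cases hp : sqNorm p = 0
  · rw [sqNorm_eq_dotProduct, dotProduct_self_eq_zero] at hp
    simp [hp]
  · rw [mul_inv_cancel_left₀ hp]

lemma sum_sq_sub_mul_eq_leastSquares_add {m : ℕ} (a p : Fin m → ℝ) (x : ℝ) :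
    ∑ i, (a i - p i * x) ^ 2 =
      ∑ i, (a i - p i * ((sqNorm p)⁻¹ * (a ⬝ᵥ p))) ^ 2
        + sqNorm p * (x - (sqNorm p)⁻¹ * (a ⬝ᵥ p)) ^ 2 := by
  have hs := sqNorm_mul_leastSquaresCoeff a p
  rw [sum_sq_sub_mul_eq, sum_sq_sub_mul_eq]
  linear_combination 2 * (x - (sqNorm p)⁻¹ * (a ⬝ᵥ p)) * hs

lemma sum_sq_sub_mul_convex_update_le {m : ℕ} (a p : Fin m → ℝ) (x β : ℝ) (hβ0 : 0 ≤ β)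
    (hβ1 : β ≤ 1) :
    ∑ i, (a i - p i * (β * x + (1 - β) * ((sqNorm p)⁻¹ * (a ⬝ᵥ p)))) ^ 2
      ≤ ∑ i, (a i - p i * x) ^ 2 := by
  set s := (sqNorm p)⁻¹ * (a ⬝ᵥ p)
  rw [sum_sq_sub_mul_eq_leastSquares_add a p x, sum_sq_sub_mul_eq_leastSquares_add]
  have hP : 0 ≤ sqNorm p := sum_nonneg fun i _ => sq_nonneg (p i)
  calc _ = ∑ i, (a i - p i * s) ^ 2 + β ^ 2 * (sqNorm p * (x - s) ^ 2) := by ring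
    _ ≤ ∑ i, (a i - p i * s) ^ 2 + sqNorm p * (x - s) ^ 2 := by
      grw [mul_le_of_le_one_left (by positivity) (pow_le_one₀ hβ0 hβ1)]

theorem alada_odd_update_decreases_error_general {m n : ℕ}
    (A : Matrix (Fin m) (Fin n) ℝ) (p : Fin m → ℝ)
    (q : Fin n → ℝ) (β : ℝ) (hβ0 : 0 ≤ β) (hβ1 : β ≤ 1) :
    frobNorm (A - Matrix.vecMulVec p (β • q + (1 - β) • ((sqNorm p)⁻¹ • Aᵀ.mulVec p)))
      ≤ frobNorm (A - Matrix.vecMulVec p q) := by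
  rw [frobNorm_sub_vecMulVec, frobNorm_sub_vecMulVec]
  refine Real.sqrt_le_sqrt (sum_le_sum fun j _ => ?_)
  have hcol : (Aᵀ *ᵥ p) j = (fun i => A i j) ⬝ᵥ p := rfl
  simpa only [Pi.add_apply, Pi.smul_apply, smul_eq_mul, hcol] using
    sum_sq_sub_mul_convex_update_le (fun i => A i j) p (q j) β hβ0 hβ1

/-- Odd-iteration case of Proposition 1: updating the right factor
`q⁺ = β q + (1−β) (Aᵀ p)/‖p‖²` does not increase the rank-one factorization error. -/
theorem alada_odd_update_decreases_error {m n : ℕ}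
    (A : Matrix (Fin m) (Fin n) ℝ) (p : Fin m → ℝ) (hp : p ≠ 0)
    (q : Fin n → ℝ) (β : ℝ) (hβ0 : 0 ≤ β) (hβ1 : β ≤ 1) :
    frobNorm (A - Matrix.vecMulVec p (β • q + (1 - β) • ((sqNorm p)⁻¹ • Aᵀ.mulVec p)))
      ≤ frobNorm (A - Matrix.vecMulVec p q) :=
  alada_odd_update_decreases_error_general A p q β hβ0 hβ1
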